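/- arXiv:1410.7470 — 7 statements merged into one kernel-verified Lean document; each statement's English description precedes it below -/
import Mathlib

section
/- Let C and C' be families of n-cubes containing all the maximal subcubes of their unions γ(C) and γ(C') respectively. Then the family {c ∩ c' : c ∈ C, c' ∈ C'} contains all the maximal subcubes of γ(C) ∩ γ(C'). -/
open Set

/-- An `n`-cube: a product of `n` intervals (order-convex subsets) of `ℝ`. -/
def IsCube {n : ℕ} (C : Set (Fin n → ℝ)) : Prop :=
  ∃ I : Fin n → Set ℝ, (∀ i, (I i).OrdConnected) ∧ C = Set.pi Set.univ I

/-- A maximal subcube of `X`: a cube contained in `X`, maximal for inclusion. -/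
def IsMaxSubcube {n : ℕ} (C X : Set (Fin n → ℝ)) : Prop :=
  IsCube C ∧ C ⊆ X ∧ ∀ C', IsCube C' → C' ⊆ X → C ⊆ C' → C = C'

/-- A cubical area: a subset admitting a finite cover by cubes. -/
def CubicalArea {n : ℕ} (X : Set (Fin n → ℝ)) : Prop :=
  ∃ 𝒞 : Finset (Set (Fin n → ℝ)), (∀ C ∈ 𝒞, IsCube C) ∧ ⋃₀ ↑𝒞 = X

/-- A maximal subinterval of `X ⊆ ℝ`: an interval contained in `X`, maximal for inclusion. -/
def IsMaxSubinterval (J X : Set ℝ) : Prop :=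
  J.OrdConnected ∧ J ⊆ X ∧ ∀ J', J'.OrdConnected → J' ⊆ X → J ⊆ J' → J = J'

/-!
A cube `M` inside `⋃₀ 𝒞 ∩ ⋃₀ 𝒞'` extends, by Zorn's lemma, to maximal subcubes `C ⊇ M` of
`⋃₀ 𝒞` and `C' ⊇ M` of `⋃₀ 𝒞'`, which lie in `𝒞` and `𝒞'`. Since `C ∩ C'` is again a cube
inside the intersection, maximality of `M` forces `M = C ∩ C'`. Zorn applies because the union of
a chain of cubes is a cube.
-/

section Cube

open Function

variable {n : ℕ}

theorem IsCube.inter {C C' : Set (Fin n → ℝ)} (h : IsCube C) (h' : IsCube C') :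
    IsCube (C ∩ C') := by
  obtain ⟨I, hI, rfl⟩ := h
  obtain ⟨I', hI', rfl⟩ := h'
  exact ⟨fun i => I i ∩ I' i, fun i => (hI i).inter (hI' i), pi_inter_distrib.symm⟩

theorem IsCube.eq_pi_image_eval {D : Set (Fin n → ℝ)} (h : IsCube D) :
    D = pi univ fun i => eval i '' D := by
  obtain ⟨I, -, rfl⟩ := h
  exact (subset_pi_eval_image _ _).antisymm (pi_mono fun _ _ => eval_image_univ_pi_subset)

theorem IsCube.ordConnected_image_eval {D : Set (Fin n → ℝ)} (h : IsCube D) (i : Fin n) :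
    (eval i '' D).OrdConnected := by
  obtain ⟨I, hI, rfl⟩ := h
  rcases (pi univ I).eq_empty_or_nonempty with hempty | hne
  · rw [hempty, image_empty]
    exact ordConnected_empty
  · rw [eval_image_univ_pi hne]
    exact hI i

/-- Finitely many points of the union of a directed family lie in a single member, so the
union contains the product of its projections. -/
theorem isCube_sUnion {c : Set (Set (Fin n → ℝ))} (hc : ∀ D ∈ c, IsCube D)
    (hdir : DirectedOn (· ⊆ ·) c) (hne : c.Nonempty) : IsCube (⋃₀ c) := by
  have mem_of_finite {s : Set (Fin n → ℝ)} (hs : s.Finite) (hsc : s ⊆ ⋃₀ c) :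
      ∃ D ∈ c, s ⊆ D :=
    hdir.exists_mem_subset_of_finite_of_subset_sUnion hne hs hsc
  refine ⟨fun i => eval i '' ⋃₀ c, fun i => ⟨?_⟩, ?_⟩
  · rintro _ ⟨p, hp, rfl⟩ _ ⟨q, hq, rfl⟩
    obtain ⟨D, hD, hpqD⟩ := mem_of_finite (toFinite {p, q}) (pair_subset hp hq)
    have hIcc := ((hc D hD).ordConnected_image_eval i).out
      (mem_image_of_mem _ (hpqD (mem_insert p {q})))
      (mem_image_of_mem _ (hpqD (mem_insert_of_mem p rfl)))
    exact hIcc.trans (image_mono (subset_sUnion_of_mem hD))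
  · refine (subset_pi_eval_image _ _).antisymm fun z hz => ?_
    choose y hy hyz using fun i => hz i (mem_univ i)
    obtain ⟨D, hD, hyD⟩ := mem_of_finite (finite_range y) (range_subset_iff.2 hy)
    refine subset_sUnion_of_mem hD ?_
    rw [(hc D hD).eq_pi_image_eval]
    exact fun i _ => ⟨y i, hyD (mem_range_self i), hyz i⟩

theorem exists_isMaxSubcube_superset {M X : Set (Fin n → ℝ)} (hM : IsCube M) (hMX : M ⊆ X) :
    ∃ D, M ⊆ D ∧ IsMaxSubcube D X := by
  set S := {D | IsCube D ∧ M ⊆ D ∧ D ⊆ X}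
  have chain_bound :
      ∀ c ⊆ S, IsChain (· ⊆ ·) c → c.Nonempty → ∃ ub ∈ S, ∀ D ∈ c, D ⊆ ub :=
    fun c hcS hchain hne => ⟨⋃₀ c,
      ⟨isCube_sUnion (fun D hD => (hcS hD).1) hchain.directedOn hne,
        (hcS hne.some_mem).2.1.trans (subset_sUnion_of_mem hne.some_mem),
        sUnion_subset fun D hD => (hcS hD).2.2⟩,
      fun _ => subset_sUnion_of_mem⟩
  obtain ⟨D, hMD, hD⟩ := zorn_subset_nonempty S chain_bound M ⟨hM, subset_rfl, hMX⟩
  exact ⟨D, hMD, hD.prop.1, hD.prop.2.2, fun D' hD' hD'X hDD' =>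
    hD.eq_of_subset ⟨hD', hMD.trans hDD', hD'X⟩ hDD'⟩

end Cube

theorem stmt3_general {n : ℕ} (𝒞 𝒞' : Set (Set (Fin n → ℝ)))
    (h2 : ∀ M, IsMaxSubcube M (⋃₀ 𝒞) → M ∈ 𝒞)
    (h2' : ∀ M, IsMaxSubcube M (⋃₀ 𝒞') → M ∈ 𝒞') :
    ∀ M, IsMaxSubcube M (⋃₀ 𝒞 ∩ ⋃₀ 𝒞') →
      M ∈ {D | ∃ C ∈ 𝒞, ∃ C' ∈ 𝒞', D = C ∩ C'} := by
  rintro M ⟨hM, hMX, hMmax⟩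
  obtain ⟨C, hMC, hC⟩ := exists_isMaxSubcube_superset hM (hMX.trans inter_subset_left)
  obtain ⟨C', hMC', hC'⟩ := exists_isMaxSubcube_superset hM (hMX.trans inter_subset_right)
  exact ⟨C, h2 C hC, C', h2' C' hC',
    hMmax _ (hC.1.inter hC'.1) (inter_subset_inter hC.2.1 hC'.2.1) (subset_inter hMC hMC')⟩

/-- If `𝒞` and `𝒞'` contain all the maximal subcubes of their unions, then the family
of pairwise intersections contains all maximal subcubes of `⋃₀ 𝒞 ∩ ⋃₀ 𝒞'`. -/
theorem stmt3 {n : ℕ} (𝒞 𝒞' : Set (Set (Fin n → ℝ)))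
    (h1 : ∀ C ∈ 𝒞, IsCube C) (h1' : ∀ C ∈ 𝒞', IsCube C)
    (h2 : ∀ M, IsMaxSubcube M (⋃₀ 𝒞) → M ∈ 𝒞)
    (h2' : ∀ M, IsMaxSubcube M (⋃₀ 𝒞') → M ∈ 𝒞') :
    ∀ M, IsMaxSubcube M (⋃₀ 𝒞 ∩ ⋃₀ 𝒞') →
      M ∈ {D | ∃ C ∈ 𝒞, ∃ C' ∈ 𝒞', D = C ∩ C'} :=
  stmt3_general 𝒞 𝒞' h2 h2'
end

section
/- Every maximal subcube of the complement of an n-cube I₁ × ⋯ × Iₙ in ℝ^n is of the form ℝ × ⋯ × J_k × ⋯ × ℝ, where J_k (in position k) is a maximal subinterval of the complement of I_k in ℝ. -/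
/-!
A cube `∏ Jᵢ` misses `∏ Iᵢ` exactly when `Jₖ` misses `Iₖ` for some `k`. It then lies in the
slab `{x | x k ∈ J'}` for every interval `J'` with `Jₖ ⊆ J' ⊆ Iₖᶜ`; such a slab is itself a cube
in the complement, so maximality makes the cube equal to each of these slabs. Since a slab
determines its base interval, `Jₖ` is a maximal subinterval of `Iₖᶜ`.
-/

open Set

open Function

lemma isCube_setOf_apply_mem {n : ℕ} (k : Fin n) {J : Set ℝ} (hJ : J.OrdConnected) :
    IsCube {x : Fin n → ℝ | x k ∈ J} := by
  classical
  refine ⟨update (fun _ => univ) k J, fun i => ?_, eval_preimage (α := fun _ => ℝ)⟩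
  rcases eq_or_ne i k with rfl | hik
  · simpa using hJ
  · simpa [hik] using ordConnected_univ

lemma setOf_apply_mem_injective {ι α : Type*} [Nonempty α] (k : ι) :
    Injective fun J : Set α => {x : ι → α | x k ∈ J} :=
  (surjective_eval (β := fun _ => α) k).preimage_injective

theorem stmt4_general {n : ℕ} (I : Fin n → Set ℝ)
    (C : Set (Fin n → ℝ)) (hC : IsMaxSubcube C (Set.pi Set.univ I)ᶜ) :
    ∃ k : Fin n, ∃ J : Set ℝ, IsMaxSubinterval J (I k)ᶜ ∧
      C = {x : Fin n → ℝ | x k ∈ J} := by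
  obtain ⟨⟨J, hJ, rfl⟩, hsub, hmax⟩ := hC
  obtain ⟨k, hk⟩ : ∃ k, Disjoint (J k) (I k) :=
    disjoint_univ_pi.1 (subset_compl_iff_disjoint_right.1 hsub)
  have hJk : J k ⊆ (I k)ᶜ := hk.subset_compl_right
  have eq_slab : ∀ J' : Set ℝ, J'.OrdConnected → J' ⊆ (I k)ᶜ → J k ⊆ J' →
      pi univ J = {x : Fin n → ℝ | x k ∈ J'} := fun J' hJ' hJ'I hJJ' =>
    hmax _ (isCube_setOf_apply_mem k hJ') (fun x hx hxI => hJ'I hx (hxI k trivial))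
      (fun x hx => hJJ' (hx k trivial))
  refine ⟨k, J k, ⟨hJ k, hJk, fun J' hJ' hJ'I hJJ' => ?_⟩, eq_slab _ (hJ k) hJk subset_rfl⟩
  exact setOf_apply_mem_injective k
    ((eq_slab _ (hJ k) hJk subset_rfl).symm.trans (eq_slab J' hJ' hJ'I hJJ'))

/-- Every maximal subcube of the complement of a cube `I₁ × ⋯ × Iₙ` is of the form
`ℝ × ⋯ × J_k × ⋯ × ℝ` with `J_k` a maximal subinterval of `(I_k)ᶜ`. -/
theorem stmt4 {n : ℕ} (I : Fin n → Set ℝ) (hI : ∀ i, (I i).OrdConnected)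
    (C : Set (Fin n → ℝ)) (hC : IsMaxSubcube C (Set.pi Set.univ I)ᶜ) :
    ∃ k : Fin n, ∃ J : Set ℝ, IsMaxSubinterval J (I k)ᶜ ∧
      C = {x : Fin n → ℝ | x k ∈ J} :=
  stmt4_general I C hC
end

section
/- The complement in ℝ^n of any n-cube has at most 2n maximal subcubes. -/
open Set

/-
Every cube `M = ∏ Jᵢ` inside the complement of `C = ∏ Iᵢ` has a coordinate `i` with `Jᵢ ∩ Iᵢ = ∅`.
Two disjoint intervals lie on opposite sides of each other, so `M` is contained in one of the
`2n` open half-spaces `{x | x i < Iᵢ}` and `{x | Iᵢ < x i}`. These are cubes inside `Cᶜ`, so a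
maximal `M` is one of them.
-/

section StrictBounds

variable {α : Type*} [LinearOrder α]

def strictLowerBounds (s : Set α) : Set α := {x | ∀ y ∈ s, x < y}

def strictUpperBounds (s : Set α) : Set α := {x | ∀ y ∈ s, y < x}

lemma ordConnected_strictLowerBounds (s : Set α) : (strictLowerBounds s).OrdConnected :=
  ⟨fun _ _ _ hb _ hz y hy => hz.2.trans_lt (hb y hy)⟩

lemma ordConnected_strictUpperBounds (s : Set α) : (strictUpperBounds s).OrdConnected :=
  ⟨fun _ ha _ _ _ hz y hy => (ha y hy).trans_le hz.1⟩

lemma disjoint_strictLowerBounds (s : Set α) : Disjoint (strictLowerBounds s) s :=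
  disjoint_left.2 fun x hx hxs => lt_irrefl x (hx x hxs)

lemma disjoint_strictUpperBounds (s : Set α) : Disjoint (strictUpperBounds s) s :=
  disjoint_left.2 fun x hx hxs => lt_irrefl x (hx x hxs)

lemma Set.OrdConnected.subset_strictLowerBounds_or_subset_strictUpperBounds {s t : Set α}
    (hs : s.OrdConnected) (ht : t.OrdConnected) (hst : Disjoint s t) :
    s ⊆ strictLowerBounds t ∨ s ⊆ strictUpperBounds t := by
  by_contra! h
  obtain ⟨⟨x, hxs, hx⟩, ⟨x', hx's, hx'⟩⟩ := And.imp not_subset.1 not_subset.1 h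
  simp only [strictLowerBounds, strictUpperBounds, mem_ofPred_eq, not_forall, not_lt] at hx hx'
  obtain ⟨y, hyt, hyx⟩ := hx
  obtain ⟨y', hy't, hx'y'⟩ := hx'
  rcases le_total x y' with hxy' | hy'x
  · exact disjoint_left.1 hst hxs (ht.out hyt hy't ⟨hyx, hxy'⟩)
  · exact disjoint_left.1 hst (hs.out hx's hxs ⟨hx'y', hy'x⟩) hy't

end StrictBounds

lemma exists_disjoint_of_univ_pi_subset_compl {ι : Type*} {α : ι → Type*}
    {I J : ∀ i, Set (α i)} (h : pi univ J ⊆ (pi univ I)ᶜ) : ∃ i, Disjoint (J i) (I i) := by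
  have : pi univ (fun i => J i ∩ I i) = ∅ := by
    rw [pi_inter_distrib, ← disjoint_iff_inter_eq_empty]
    exact subset_compl_iff_disjoint_right.1 h
  simpa [disjoint_iff_inter_eq_empty] using univ_pi_eq_empty_iff.1 this

lemma preimage_eval_subset_compl_pi {ι : Type*} {α : ι → Type*} {I : ∀ i, Set (α i)} {i : ι}
    {s : Set (α i)} (hs : Disjoint s (I i)) : Function.eval i ⁻¹' s ⊆ (pi univ I)ᶜ :=
  fun _ hx hxI => disjoint_left.1 hs hx (hxI i (mem_univ i))

section Cubes

variable {n : ℕ}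

lemma isCube_preimage_eval (i : Fin n) {s : Set ℝ} (hs : s.OrdConnected) :
    IsCube (Function.eval i ⁻¹' s) := by
  classical
  refine ⟨Function.update (fun _ => univ) i s, fun j => ?_,
    (univ_pi_update_univ (α := fun _ => ℝ) i s).symm⟩
  rcases eq_or_ne j i with rfl | hji
  · simpa using hs
  · simpa [Function.update_of_ne hji] using ordConnected_univ

lemma IsMaxSubcube.eq_preimage_eval {J : Fin n → Set ℝ} {X : Set (Fin n → ℝ)}
    (hM : IsMaxSubcube (pi univ J) X) {i : Fin n} {s : Set ℝ} (hs : s.OrdConnected)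
    (hsX : Function.eval i ⁻¹' s ⊆ X) (hJs : J i ⊆ s) : pi univ J = Function.eval i ⁻¹' s :=
  hM.2.2 _ (isCube_preimage_eval i hs) hsX fun _ hx => hJs (hx i (mem_univ i))

theorem IsMaxSubcube.mem_range_union_range {I : Fin n → Set ℝ}
    (hI : ∀ i, (I i).OrdConnected) {M : Set (Fin n → ℝ)} (hM : IsMaxSubcube M (pi univ I)ᶜ) :
    M ∈ range (fun i => Function.eval i ⁻¹' strictLowerBounds (I i)) ∪
      range (fun i => Function.eval i ⁻¹' strictUpperBounds (I i)) := by
  obtain ⟨J, hJ, rfl⟩ := hM.1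
  obtain ⟨i, hi⟩ := exists_disjoint_of_univ_pi_subset_compl hM.2.1
  rcases (hJ i).subset_strictLowerBounds_or_subset_strictUpperBounds (hI i) hi with hlow | hup
  · exact Or.inl ⟨i, (hM.eq_preimage_eval (ordConnected_strictLowerBounds _)
      (preimage_eval_subset_compl_pi (disjoint_strictLowerBounds _)) hlow).symm⟩
  · exact Or.inr ⟨i, (hM.eq_preimage_eval (ordConnected_strictUpperBounds _)
      (preimage_eval_subset_compl_pi (disjoint_strictUpperBounds _)) hup).symm⟩

end Cubes

/-- The complement of an `n`-cube has at most `2n` maximal subcubes. -/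
theorem stmt5 {n : ℕ} (C : Set (Fin n → ℝ)) (hC : IsCube C) :
    {M | IsMaxSubcube M Cᶜ}.Finite ∧ {M | IsMaxSubcube M Cᶜ}.ncard ≤ 2 * n := by
  obtain ⟨I, hI, rfl⟩ := hC
  have hsub : {M | IsMaxSubcube M (pi univ I)ᶜ} ⊆ _ := fun M hM => hM.mem_range_union_range hI
  refine ⟨(toFinite _).subset hsub, (ncard_le_ncard hsub).trans ((ncard_union_le _ _).trans ?_)⟩
  calc _ ≤ Nat.card (Fin n) + Nat.card (Fin n) :=
        add_le_add (Finite.card_range_le _) (Finite.card_range_le _)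
    _ = 2 * n := by rw [Nat.card_fin, two_mul]
end

section
/- In the tensor product A ⊗ B of two distributive lattices with zero, taken in the category of semilattices with zero, pure tensors multiply componentwise: (a₁ ⊗ b₁) ∧ (a₂ ⊗ b₂) = (a₁ ∧ a₂) ⊗ (b₁ ∧ b₂). -/
/-- A bimorphism of join-semilattices with zero: separately a sup- and bot-preserving
map in each variable. -/
def SlatzBimorphism {A B T : Type*} [SemilatticeSup A] [OrderBot A]
    [SemilatticeSup B] [OrderBot B] [SemilatticeSup T] [OrderBot T]
    (i : A → B → T) : Prop :=
  (∀ b, i ⊥ b = ⊥) ∧ (∀ a, i a ⊥ = ⊥) ∧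
  (∀ a a' b, i (a ⊔ a') b = i a b ⊔ i a' b) ∧
  (∀ a b b', i a (b ⊔ b') = i a b ⊔ i a b')

/-- `i : A → B → T` exhibits `T` as the tensor product `A ⊗ B` in the category of
join-semilattices with zero: `i` is a bimorphism through which every bimorphism
factors uniquely by a morphism of semilattices with zero. -/
def IsSlatzTensor {A B T : Type*} [SemilatticeSup A] [OrderBot A]
    [SemilatticeSup B] [OrderBot B] [SemilatticeSup T] [OrderBot T]
    (i : A → B → T) : Prop :=
  SlatzBimorphism i ∧
  ∀ (X : Type) (_ : SemilatticeSup X) (_ : OrderBot X) (f : A → B → X),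
    SlatzBimorphism f →
      ∃! h : T → X, (∀ s t : T, h (s ⊔ t) = h s ⊔ h t) ∧ h ⊥ = ⊥ ∧
        ∀ a b, h (i a b) = f a b

/-!
A morphism of join-semilattices with zero from `T` to `Prop` is the same thing as the complement
of an ideal of `T`. Uniqueness in the universal property therefore says that an ideal of `A ⊗ B`
is determined by the pure tensors it contains; applied to `↓u` and `↓u ∩ ↓v` it shows that
`u ≤ v` as soon as every pure tensor below `u` is below `v`. Existence, applied to the Prop-valued
bimorphisms `(x, y) ↦ x ≰ p ∧ y ≰ q`, shows that for nonzero `c, d` the inequality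
`c ⊗ d ≤ a ⊗ b` forces `c ≤ a` and `d ≤ b`. Together these reduce `(a₁ ⊗ b₁) ∧ (a₂ ⊗ b₂)` to the
pure tensors below both factors, which lie below `(a₁ ∧ a₂) ⊗ (b₁ ∧ b₂)`.
-/

section

variable {A B T : Type*} [SemilatticeSup A] [OrderBot A]
    [SemilatticeSup B] [OrderBot B] [SemilatticeSup T] [OrderBot T]

theorem SlatzBimorphism.mono {i : A → B → T} (hi : SlatzBimorphism i) {a a' : A} {b b' : B}
    (ha : a ≤ a') (hb : b ≤ b') : i a b ≤ i a' b' :=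
  calc i a b ≤ i a' b := by rw [← sup_eq_right.2 ha, hi.2.2.1]; exact le_sup_left
    _ ≤ i a' b' := by rw [← sup_eq_right.2 hb, hi.2.2.2]; exact le_sup_left

theorem SlatzBimorphism.comp {X : Type*} [SemilatticeSup X] [OrderBot X] {i : A → B → T}
    (hi : SlatzBimorphism i) (g : SupBotHom T X) : SlatzBimorphism fun a b => g (i a b) := by
  obtain ⟨hbot_left, hbot_right, hsup_left, hsup_right⟩ := hi
  exact ⟨fun b => by simp [hbot_left], fun a => by simp [hbot_right],
    fun a a' b => by simp [hsup_left], fun a b b' => by simp [hsup_right]⟩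

theorem slatzBimorphism_not_le_and_not_le (p : A) (q : B) :
    SlatzBimorphism fun (x : A) (y : B) => ¬x ≤ p ∧ ¬y ≤ q := by
  refine ⟨fun y => ?_, fun x => ?_, fun x x' y => ?_, fun x y y' => ?_⟩ <;>
    simp only [sup_Prop_eq, bot_le, not_true_eq_false, false_and, and_false, sup_le_iff] <;>
    exact propext (by tauto)

def Order.Ideal.notMemSupBotHom (I : Order.Ideal T) : SupBotHom T Prop where
  toFun t := t ∉ I
  map_sup' s t := propext <| by simp only [Order.Ideal.sup_mem_iff, sup_Prop_eq]; tauto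
  map_bot' := propext <| by simp [Order.Ideal.bot_mem]

namespace IsSlatzTensor

variable {i : A → B → T}

theorem supBotHom_ext (h : IsSlatzTensor i) {X : Type} [SemilatticeSup X] [OrderBot X]
    {g₁ g₂ : SupBotHom T X} (heq : ∀ a b, g₁ (i a b) = g₂ (i a b)) : g₁ = g₂ := by
  refine DFunLike.coe_injective ((h.2 X ‹_› ‹_› _ (h.1.comp g₁)).unique ?_ ?_)
  · exact ⟨map_sup g₁, map_bot g₁, fun _ _ => rfl⟩
  · exact ⟨map_sup g₂, map_bot g₂, fun a b => (heq a b).symm⟩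

theorem ideal_ext (h : IsSlatzTensor i) {I J : Order.Ideal T}
    (hIJ : ∀ a b, i a b ∈ I ↔ i a b ∈ J) : I = J := by
  have hchar : I.notMemSupBotHom = J.notMemSupBotHom :=
    h.supBotHom_ext fun a b => propext (not_congr (hIJ a b))
  exact SetLike.ext fun t => not_iff_not.1 (iff_of_eq (DFunLike.congr_fun hchar t))

theorem le_of_forall_tensor_le (h : IsSlatzTensor i) {u v : T}
    (huv : ∀ a b, i a b ≤ u → i a b ≤ v) : u ≤ v := by
  have hideal : Order.Ideal.principal u = Order.Ideal.principal u ⊓ Order.Ideal.principal v :=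
    h.ideal_ext fun a b => by
      simp only [Order.Ideal.mem_inf, Order.Ideal.mem_principal]
      exact ⟨fun hu => ⟨hu, huv a b hu⟩, And.left⟩
  have hu : u ∈ Order.Ideal.principal u ⊓ Order.Ideal.principal v :=
    hideal ▸ Order.Ideal.mem_principal_self
  exact Order.Ideal.mem_principal.1 (Order.Ideal.mem_inf.1 hu).2

theorem apply_le_apply (h : IsSlatzTensor i) {X : Type} [SemilatticeSup X] [OrderBot X]
    {f : A → B → X} (hf : SlatzBimorphism f) {a c : A} {b d : B} (hle : i c d ≤ i a b) :
    f c d ≤ f a b := by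
  obtain ⟨g, ⟨hg_sup, -, hg_fac⟩, -⟩ := h.2 X ‹_› ‹_› f hf
  rw [← hg_fac, ← hg_fac, ← sup_eq_right.2 hle, hg_sup]
  exact le_sup_left

theorem le_and_le_of_tensor_le (h : IsSlatzTensor i) {a c : A} {b d : B} (hc : c ≠ ⊥)
    (hd : d ≠ ⊥) (hle : i c d ≤ i a b) : c ≤ a ∧ d ≤ b := by
  have ha := h.apply_le_apply (slatzBimorphism_not_le_and_not_le a ⊥) hle
  have hb := h.apply_le_apply (slatzBimorphism_not_le_and_not_le ⊥ b) hle
  simp only [le_bot_iff, le_refl, not_true_eq_false, and_false, false_and, le_Prop_eq] at ha hb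
  exact ⟨by_contra fun hca => ha ⟨hca, hd⟩, by_contra fun hdb => hb ⟨hc, hdb⟩⟩

end IsSlatzTensor

end

/-- In the tensor product of distributive lattices with zero (in the category of
semilattices with zero), pure tensors multiply componentwise under `⊓`. -/
theorem stmt14 {A B T : Type*} [DistribLattice A] [OrderBot A]
    [DistribLattice B] [OrderBot B] [DistribLattice T] [OrderBot T]
    (i : A → B → T) (h : IsSlatzTensor i) (a₁ a₂ : A) (b₁ b₂ : B) :
    i a₁ b₁ ⊓ i a₂ b₂ = i (a₁ ⊓ a₂) (b₁ ⊓ b₂) := by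
  refine le_antisymm (h.le_of_forall_tensor_le fun c d hcd => ?_)
    (le_inf (h.1.mono inf_le_left inf_le_left) (h.1.mono inf_le_right inf_le_right))
  rcases eq_or_ne c ⊥ with rfl | hc
  · simp [h.1.1]
  rcases eq_or_ne d ⊥ with rfl | hd
  · simp [h.1.2.1]
  obtain ⟨hca₁, hdb₁⟩ := h.le_and_le_of_tensor_le hc hd (hcd.trans inf_le_left)
  obtain ⟨hca₂, hdb₂⟩ := h.le_and_le_of_tensor_le hc hd (hcd.trans inf_le_right)
  exact h.1.mono (le_inf hca₁ hca₂) (le_inf hdb₁ hdb₂)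
end

section
/- Let f : B_ℝ × B_ℝ → X be a bimorphism of join-semilattices with zero, where B_ℝ is the Boolean algebra of cubical areas of ℝ. If a cubical area of ℝ² admits two finite covers by rectangles (products of intervals), X = ⋃_{i∈I} aᵢ × bᵢ = ⋃_{j∈J} a'ⱼ × b'ⱼ, then ⋁_{i∈I} f(aᵢ, bᵢ) = ⋁_{j∈J} f(a'ⱼ, b'ⱼ). -/
/-!
Let `a × b` be a rectangle of the first cover. Since the complement of an interval of `ℝ` is
the union of two intervals, `a` splits into finitely many intervals, each lying inside or
outside every `A'ⱼ`, and likewise `b` with respect to the `B'ⱼ`. Bi-additivity writes `f a b`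
as the join of `f` over the resulting cells `t × u`; a nonempty cell meets, hence lies in, some
rectangle `A'ⱼ × B'ⱼ`, so monotonicity gives `f a b ≤ ⋁ⱼ f (A'ⱼ, B'ⱼ)`. By symmetry the two
joins agree.
-/

open Set

/-- Membership in `B_ℝ`: a finite union of intervals (order-convex subsets) of `ℝ`. -/
def FinUnionIntervals (X : Set ℝ) : Prop :=
  ∃ 𝒮 : Finset (Set ℝ), (∀ I ∈ 𝒮, I.OrdConnected) ∧ ⋃₀ ↑𝒮 = X

namespace Set.OrdConnected

variable {α : Type*} [LinearOrder α]

theorem exists_finset_cover_subset_or_disjoint {s : Set α} (hs : s.OrdConnected) :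
    ∃ P : Finset (Set α), (∀ p ∈ P, p.OrdConnected) ∧ ⋃₀ ↑P = (univ : Set α) ∧
      ∀ p ∈ P, p ⊆ s ∨ Disjoint p s := by
  classical
  -- `s`, the points below all of `s`, and the points above all of `s`
  refine ⟨{s, ⋂ y ∈ s, Iio y, ⋂ y ∈ s, Ioi y}, ?_, ?_, ?_⟩
  · simp only [Finset.mem_insert, Finset.mem_singleton]
    rintro p (rfl | rfl | rfl) <;> infer_instance
  · refine eq_univ_of_forall fun x => ?_
    by_contra hx
    simp only [Finset.coe_insert, Finset.coe_singleton, sUnion_insert, sUnion_singleton,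
      mem_union, mem_iInter₂, mem_Iio, mem_Ioi, not_or, not_forall, not_lt] at hx
    obtain ⟨hxs, ⟨y, hy, hyx⟩, ⟨z, hz, hxz⟩⟩ := hx
    exact hxs (hs.out hy hz ⟨hyx, hxz⟩)
  · simp only [Finset.mem_insert, Finset.mem_singleton]
    rintro p (rfl | rfl | rfl)
    · exact Or.inl subset_rfl
    all_goals
      refine Or.inr (disjoint_left.2 fun x hx hxs => ?_)
      simpa using mem_iInter₂.1 hx x hxs

theorem exists_finset_refinement {a : Set α} (ha : a.OrdConnected) {κ : Type*} (J : Finset κ)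
    {s : κ → Set α} (hs : ∀ j ∈ J, (s j).OrdConnected) :
    ∃ T : Finset (Set α), (∀ t ∈ T, t.OrdConnected) ∧ ⋃₀ ↑T = a ∧
      ∀ t ∈ T, ∀ j ∈ J, t ⊆ s j ∨ Disjoint t (s j) := by
  classical
  induction J using Finset.induction_on with
  | empty => exact ⟨{a}, by simpa using ha, by simp, by simp⟩
  | @insert j J _ ih =>
    obtain ⟨T, hT, hTa, hTs⟩ := ih fun i hi => hs i (Finset.mem_insert_of_mem hi)
    obtain ⟨P, hP, hPu, hPs⟩ :=
      (hs j (Finset.mem_insert_self j J)).exists_finset_cover_subset_or_disjoint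
    refine ⟨(T ×ˢ P).image fun q => q.1 ∩ q.2, ?_, ?_, ?_⟩
    · simp only [Finset.mem_image, Finset.mem_product]
      rintro _ ⟨⟨t, p⟩, ⟨ht, hp⟩, rfl⟩
      exact (hT t ht).inter (hP p hp)
    · rw [Finset.coe_image, Finset.coe_product, sUnion_image, ← sUnion_inter_sUnion, hTa, hPu,
        inter_univ]
    · simp only [Finset.mem_image, Finset.mem_product, Finset.mem_insert]
      rintro _ ⟨⟨t, p⟩, ⟨ht, hp⟩, rfl⟩ i (rfl | hi)
      · exact (hPs p hp).imp inter_subset_right.trans (Disjoint.mono_left inter_subset_right)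
      · exact (hTs t ht i hi).imp inter_subset_left.trans (Disjoint.mono_left inter_subset_left)

end Set.OrdConnected

theorem Set.OrdConnected.finUnionIntervals {s : Set ℝ} (hs : s.OrdConnected) :
    FinUnionIntervals s :=
  ⟨{s}, by simpa using hs, by simp⟩

theorem finUnionIntervals_sUnion {T : Finset (Set ℝ)} (hT : ∀ t ∈ T, t.OrdConnected) :
    FinUnionIntervals (⋃₀ ↑T) :=
  ⟨T, hT, rfl⟩

structure IsBimorphism {X : Type*} [SemilatticeSup X] [OrderBot X]
    (f : Set ℝ → Set ℝ → X) : Prop where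
  map_empty_left : ∀ b, FinUnionIntervals b → f ∅ b = ⊥
  map_empty_right : ∀ a, FinUnionIntervals a → f a ∅ = ⊥
  map_union_left : ∀ a a' b, FinUnionIntervals a → FinUnionIntervals a' →
    FinUnionIntervals b → f (a ∪ a') b = f a b ⊔ f a' b
  map_union_right : ∀ a b b', FinUnionIntervals a → FinUnionIntervals b →
    FinUnionIntervals b' → f a (b ∪ b') = f a b ⊔ f a b'

namespace IsBimorphism

variable {X : Type*} [SemilatticeSup X] [OrderBot X] {f : Set ℝ → Set ℝ → X}

theorem map_sUnion_left (hf : IsBimorphism f) {T : Finset (Set ℝ)}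
    (hT : ∀ t ∈ T, t.OrdConnected) {b : Set ℝ} (hb : FinUnionIntervals b) :
    f (⋃₀ ↑T) b = T.sup fun t => f t b := by
  classical
  induction T using Finset.induction_on with
  | empty => simpa using hf.map_empty_left b hb
  | @insert t T _ ih =>
    have hT' : ∀ s ∈ T, s.OrdConnected := fun s hs => hT s (Finset.mem_insert_of_mem hs)
    rw [Finset.coe_insert, sUnion_insert, Finset.sup_insert, ← ih hT',
      hf.map_union_left _ _ _ (hT t (Finset.mem_insert_self t T)).finUnionIntervals
        (finUnionIntervals_sUnion hT') hb]

theorem map_sUnion_right (hf : IsBimorphism f) {T : Finset (Set ℝ)}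
    (hT : ∀ t ∈ T, t.OrdConnected) {a : Set ℝ} (ha : FinUnionIntervals a) :
    f a (⋃₀ ↑T) = T.sup fun t => f a t := by
  classical
  induction T using Finset.induction_on with
  | empty => simpa using hf.map_empty_right a ha
  | @insert t T _ ih =>
    have hT' : ∀ s ∈ T, s.OrdConnected := fun s hs => hT s (Finset.mem_insert_of_mem hs)
    rw [Finset.coe_insert, sUnion_insert, Finset.sup_insert, ← ih hT',
      hf.map_union_right _ _ _ ha (hT t (Finset.mem_insert_self t T)).finUnionIntervals
        (finUnionIntervals_sUnion hT')]

theorem mono_left (hf : IsBimorphism f) {a a' b : Set ℝ} (ha : FinUnionIntervals a)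
    (ha' : FinUnionIntervals a') (hb : FinUnionIntervals b) (h : a ⊆ a') : f a b ≤ f a' b := by
  have := hf.map_union_left a a' b ha ha' hb
  rw [union_eq_self_of_subset_left h] at this
  exact this ▸ le_sup_left

theorem mono_right (hf : IsBimorphism f) {a b b' : Set ℝ} (ha : FinUnionIntervals a)
    (hb : FinUnionIntervals b) (hb' : FinUnionIntervals b') (h : b ⊆ b') : f a b ≤ f a b' := by
  have := hf.map_union_right a b b' ha hb hb'
  rw [union_eq_self_of_subset_left h] at this
  exact this ▸ le_sup_left

variable {κ : Type*} {J : Finset κ} {A' B' : κ → Set ℝ}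

theorem le_sup_of_subset_or_disjoint (hf : IsBimorphism f)
    (hA' : ∀ j ∈ J, (A' j).OrdConnected) (hB' : ∀ j ∈ J, (B' j).OrdConnected)
    {t u : Set ℝ} (ht : t.OrdConnected) (hu : u.OrdConnected)
    (htA' : ∀ j ∈ J, t ⊆ A' j ∨ Disjoint t (A' j)) (huB' : ∀ j ∈ J, u ⊆ B' j ∨ Disjoint u (B' j))
    (hsub : t ×ˢ u ⊆ ⋃ j ∈ J, A' j ×ˢ B' j) :
    f t u ≤ J.sup fun j => f (A' j) (B' j) := by
  rcases t.eq_empty_or_nonempty with rfl | ⟨x, hx⟩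
  · exact (hf.map_empty_left u hu.finUnionIntervals).trans_le bot_le
  rcases u.eq_empty_or_nonempty with rfl | ⟨y, hy⟩
  · exact (hf.map_empty_right t ht.finUnionIntervals).trans_le bot_le
  obtain ⟨j, hj, hxj, hyj⟩ : ∃ j ∈ J, x ∈ A' j ∧ y ∈ B' j := by
    simpa [and_left_comm] using hsub (mk_mem_prod hx hy)
  have htj : t ⊆ A' j := (htA' j hj).resolve_right (not_disjoint_iff.2 ⟨x, hx, hxj⟩)
  have huj : u ⊆ B' j := (huB' j hj).resolve_right (not_disjoint_iff.2 ⟨y, hy, hyj⟩)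
  calc f t u ≤ f (A' j) u :=
        hf.mono_left ht.finUnionIntervals (hA' j hj).finUnionIntervals hu.finUnionIntervals htj
    _ ≤ f (A' j) (B' j) :=
        hf.mono_right (hA' j hj).finUnionIntervals hu.finUnionIntervals
          (hB' j hj).finUnionIntervals huj
    _ ≤ J.sup fun j => f (A' j) (B' j) := Finset.le_sup (f := fun j => f (A' j) (B' j)) hj

theorem le_sup_of_prod_subset (hf : IsBimorphism f)
    (hA' : ∀ j ∈ J, (A' j).OrdConnected) (hB' : ∀ j ∈ J, (B' j).OrdConnected)
    {a b : Set ℝ} (ha : a.OrdConnected) (hb : b.OrdConnected)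
    (hsub : a ×ˢ b ⊆ ⋃ j ∈ J, A' j ×ˢ B' j) :
    f a b ≤ J.sup fun j => f (A' j) (B' j) := by
  obtain ⟨T, hT, rfl, hTA'⟩ := ha.exists_finset_refinement J hA'
  obtain ⟨U, hU, rfl, hUB'⟩ := hb.exists_finset_refinement J hB'
  rw [hf.map_sUnion_left hT (finUnionIntervals_sUnion hU)]
  refine Finset.sup_le fun t ht => ?_
  rw [hf.map_sUnion_right hU (hT t ht).finUnionIntervals]
  refine Finset.sup_le fun u hu => ?_
  exact hf.le_sup_of_subset_or_disjoint hA' hB' (hT t ht) (hU u hu) (hTA' t ht) (hUB' u hu)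
    ((prod_mono (subset_sUnion_of_mem ht) (subset_sUnion_of_mem hu)).trans hsub)

end IsBimorphism

/-- If `f : B_ℝ × B_ℝ → X` is a bimorphism of join-semilattices with zero and a
cubical area of `ℝ²` admits two finite covers by rectangles, then the corresponding
joins of values of `f` coincide. -/
theorem stmt17 {X : Type*} [SemilatticeSup X] [OrderBot X]
    (f : Set ℝ → Set ℝ → X)
    (hbot1 : ∀ b, FinUnionIntervals b → f ∅ b = ⊥)
    (hbot2 : ∀ a, FinUnionIntervals a → f a ∅ = ⊥)
    (hsup1 : ∀ a a' b, FinUnionIntervals a → FinUnionIntervals a' →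
      FinUnionIntervals b → f (a ∪ a') b = f a b ⊔ f a' b)
    (hsup2 : ∀ a b b', FinUnionIntervals a → FinUnionIntervals b →
      FinUnionIntervals b' → f a (b ∪ b') = f a b ⊔ f a b')
    {ι κ : Type*} (I : Finset ι) (J : Finset κ)
    (A B : ι → Set ℝ) (A' B' : κ → Set ℝ)
    (hA : ∀ i ∈ I, (A i).OrdConnected) (hB : ∀ i ∈ I, (B i).OrdConnected)
    (hA' : ∀ j ∈ J, (A' j).OrdConnected) (hB' : ∀ j ∈ J, (B' j).OrdConnected)
    (hcover : (⋃ i ∈ I, A i ×ˢ B i) = ⋃ j ∈ J, A' j ×ˢ B' j) :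
    I.sup (fun i => f (A i) (B i)) = J.sup (fun j => f (A' j) (B' j)) := by
  have hf : IsBimorphism f := ⟨hbot1, hbot2, hsup1, hsup2⟩
  refine le_antisymm (Finset.sup_le fun i hi => ?_) (Finset.sup_le fun j hj => ?_)
  · refine hf.le_sup_of_prod_subset hA' hB' (hA i hi) (hB i hi) ?_
    exact hcover ▸ subset_biUnion_of_mem (u := fun i => A i ×ˢ B i) hi
  · refine hf.le_sup_of_prod_subset hA hB (hA' j hj) (hB' j hj) ?_
    exact hcover.symm ▸ subset_biUnion_of_mem (u := fun j => A' j ×ˢ B' j) hj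
end

section
/- The Boolean algebra B_{ℝ²} of cubical areas of ℝ², regarded as a join-semilattice with zero, together with the bimorphism (a,b) ↦ a × b from B_ℝ × B_ℝ, satisfies the universal property of the tensor product B_ℝ ⊗ B_ℝ in the category of semilattices with zero: for every semilattice X with zero and every bimorphism f : B_ℝ × B_ℝ → X there is a unique zero-preserving semilattice morphism h : B_{ℝ²} → X with h(a × b) = f(a,b). -/
open Set

/-- Membership in `B_{ℝ²}`: a finite union of rectangles (products of two intervals). -/
def CubicalArea2 (S : Set (ℝ × ℝ)) : Prop :=
  ∃ 𝒮 : Finset (Set (ℝ × ℝ)),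
    (∀ C ∈ 𝒮, ∃ a b : Set ℝ, a.OrdConnected ∧ b.OrdConnected ∧ C = a ×ˢ b) ∧
    ⋃₀ ↑𝒮 = S

/-- The join-semilattice with zero `B_{ℝ²}` of cubical areas of `ℝ²`. -/
def BA2 : Type := {S : Set (ℝ × ℝ) // CubicalArea2 S}

instance : PartialOrder BA2 := Subtype.partialOrder _

instance : SemilatticeSup BA2 where
  sup S T := ⟨S.1 ∪ T.1, by
    letI : DecidableEq (Set (ℝ × ℝ)) := Classical.decEq _
    obtain ⟨𝒮, h𝒮, hu⟩ := S.2
    obtain ⟨𝒯, h𝒯, hv⟩ := T.2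
    refine ⟨𝒮 ∪ 𝒯, ?_, ?_⟩
    · intro C hC
      rcases Finset.mem_union.mp hC with h | h
      exacts [h𝒮 C h, h𝒯 C h]
    · rw [Finset.coe_union, Set.sUnion_union, hu, hv]⟩
  le_sup_left S T := Set.subset_union_left
  le_sup_right S T := Set.subset_union_right
  sup_le S T U h1 h2 := Set.union_subset h1 h2

instance : OrderBot BA2 where
  bot := ⟨∅, ⟨∅, by simp, by simp⟩⟩
  bot_le S := Set.empty_subset _

/-!
Every cubical area is a finite union `⋃ Iₖ × Jₖ` of rectangles of intervals, and a morphism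
extending the bimorphism `f` must send it to `⨆ f Iₖ Jₖ`; this gives uniqueness. For existence
one must check that this value does not depend on the cover, which follows from the inequality
`f a b ≤ ⨆ f Iₖ Jₖ` whenever `a × b ⊆ ⋃ Iₖ × Jₖ`. It is proved by induction on the cover,
splitting `a` along `I₀` and `b` along `J₀`: the pieces outside `I₀ × J₀` are again products of
finite unions of intervals, because the complement of an interval of `ℝ` is a union of two
intervals.
-/

namespace Set.OrdConnected

variable {α : Type*} [LinearOrder α] {c : Set α}

theorem compl_eq (hc : c.OrdConnected) :
    cᶜ = {x | ∀ y ∈ c, x < y} ∪ {x | ∀ y ∈ c, y < x} := by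
  ext x
  simp only [mem_compl_iff, mem_union, mem_ofPred_eq]
  constructor
  · intro hx
    by_contra! h
    obtain ⟨⟨y, hy, hyx⟩, ⟨z, hz, hxz⟩⟩ := h
    exact hx (hc.out hy hz ⟨hyx, hxz⟩)
  · rintro (h | h) hx
    exacts [lt_irrefl x (h x hx), lt_irrefl x (h x hx)]

end Set.OrdConnected

namespace FinUnionIntervals

theorem empty : FinUnionIntervals ∅ := ⟨∅, by simp, by simp⟩

theorem of_ordConnected {s : Set ℝ} (hs : s.OrdConnected) : FinUnionIntervals s :=
  ⟨{s}, by simpa using hs, by simp⟩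

theorem union {s t : Set ℝ} (hs : FinUnionIntervals s) (ht : FinUnionIntervals t) :
    FinUnionIntervals (s ∪ t) := by
  classical
  obtain ⟨𝒮, h𝒮, rfl⟩ := hs
  obtain ⟨𝒯, h𝒯, rfl⟩ := ht
  refine ⟨𝒮 ∪ 𝒯, fun I hI => ?_, by rw [Finset.coe_union, sUnion_union]⟩
  exact (Finset.mem_union.mp hI).elim (h𝒮 I) (h𝒯 I)

theorem induction_on {P : Set ℝ → Prop} {s : Set ℝ} (hs : FinUnionIntervals s) (empty : P ∅)
    (union : ∀ I s, I.OrdConnected → FinUnionIntervals s → P s → P (I ∪ s)) : P s := by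
  classical
  obtain ⟨𝒮, h𝒮, rfl⟩ := hs
  induction 𝒮 using Finset.induction_on with
  | empty => simpa using empty
  | insert I 𝒮 _ ih =>
    have h𝒮' : ∀ J ∈ 𝒮, J.OrdConnected := fun J hJ => h𝒮 J (Finset.mem_insert_of_mem hJ)
    rw [Finset.coe_insert, sUnion_insert]
    exact union I _ (h𝒮 I (Finset.mem_insert_self I 𝒮)) ⟨𝒮, h𝒮', rfl⟩ (ih h𝒮')

theorem inter_ordConnected {s c : Set ℝ} (hs : FinUnionIntervals s) (hc : c.OrdConnected) :
    FinUnionIntervals (s ∩ c) := by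
  refine hs.induction_on (P := fun s => FinUnionIntervals (s ∩ c)) (by simpa using empty)
    fun I s hI _ ih => ?_
  rw [union_inter_distrib_right]
  exact (of_ordConnected (hI.inter hc)).union ih

theorem diff_ordConnected {s c : Set ℝ} (hs : FinUnionIntervals s) (hc : c.OrdConnected) :
    FinUnionIntervals (s \ c) := by
  rw [sdiff_eq, hc.compl_eq, inter_union_distrib_left]
  refine (hs.inter_ordConnected ?_).union (hs.inter_ordConnected ?_)
  · exact IsLowerSet.ordConnected fun x y hxy hy z hz => hxy.trans_lt (hy z hz)
  · exact IsUpperSet.ordConnected fun x y hxy hx z hz => (hx z hz).trans_le hxy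

end FinUnionIntervals

section Rectangles

variable {α β : Type*}

def rectUnion (ℛ : Finset (Set α × Set β)) : Set (α × β) := ⋃ p ∈ ℛ, p.1 ×ˢ p.2

def IsIntervalPair [Preorder α] [Preorder β] (p : Set α × Set β) : Prop :=
  p.1.OrdConnected ∧ p.2.OrdConnected

@[simp]
theorem rectUnion_empty : rectUnion (∅ : Finset (Set α × Set β)) = ∅ := by
  simp [rectUnion]

theorem rectUnion_insert [DecidableEq (Set α × Set β)] (p : Set α × Set β)
    (ℛ : Finset (Set α × Set β)) : rectUnion (insert p ℛ) = p.1 ×ˢ p.2 ∪ rectUnion ℛ :=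
  Finset.set_biUnion_insert _ _ _

theorem rectUnion_union [DecidableEq (Set α × Set β)] (ℛ ℛ' : Finset (Set α × Set β)) :
    rectUnion (ℛ ∪ ℛ') = rectUnion ℛ ∪ rectUnion ℛ' :=
  Finset.set_biUnion_union _ _ _

theorem prod_subset_rectUnion {ℛ : Finset (Set α × Set β)} {p : Set α × Set β} (hp : p ∈ ℛ) :
    p.1 ×ˢ p.2 ⊆ rectUnion ℛ :=
  subset_biUnion_of_mem (u := fun p : Set α × Set β => p.1 ×ˢ p.2) hp

end Rectangles

theorem cubicalArea2_iff {S : Set (ℝ × ℝ)} : CubicalArea2 S ↔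
    ∃ ℛ : Finset (Set ℝ × Set ℝ), (∀ p ∈ ℛ, IsIntervalPair p) ∧ rectUnion ℛ = S := by
  classical
  constructor
  · rintro ⟨𝒮, h𝒮, rfl⟩
    induction 𝒮 using Finset.induction_on with
    | empty => exact ⟨∅, by simp, by simp⟩
    | insert C 𝒮 _ ih =>
      obtain ⟨a, b, ha, hb, rfl⟩ := h𝒮 C (Finset.mem_insert_self C 𝒮)
      obtain ⟨ℛ, hℛ, hℛS⟩ := ih fun D hD => h𝒮 D (Finset.mem_insert_of_mem hD)
      refine ⟨insert (a, b) ℛ, ?_, ?_⟩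
      · exact Finset.forall_mem_insert _ _ _ |>.mpr ⟨⟨ha, hb⟩, hℛ⟩
      · rw [rectUnion_insert, hℛS, Finset.coe_insert, sUnion_insert]
  · rintro ⟨ℛ, hℛ, rfl⟩
    refine ⟨ℛ.image fun p => p.1 ×ˢ p.2, ?_, by simp [rectUnion, sUnion_image]⟩
    simp only [Finset.mem_image, forall_exists_index, and_imp, forall_apply_eq_imp_iff₂]
    exact fun p hp => ⟨p.1, p.2, (hℛ p hp).1, (hℛ p hp).2, rfl⟩

theorem cubicalArea2_rectUnion {ℛ : Finset (Set ℝ × Set ℝ)} (hℛ : ∀ p ∈ ℛ, IsIntervalPair p) :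
    CubicalArea2 (rectUnion ℛ) :=
  cubicalArea2_iff.mpr ⟨ℛ, hℛ, rfl⟩

theorem FinUnionIntervals.cubicalArea2_prod {a b : Set ℝ} (ha : FinUnionIntervals a)
    (hb : FinUnionIntervals b) : CubicalArea2 (a ×ˢ b) := by
  obtain ⟨𝒮, h𝒮, rfl⟩ := ha
  obtain ⟨𝒯, h𝒯, rfl⟩ := hb
  refine cubicalArea2_iff.mpr ⟨𝒮 ×ˢ 𝒯, fun p hp => ?_, ?_⟩
  · rw [Finset.mem_product] at hp
    exact ⟨h𝒮 _ hp.1, h𝒯 _ hp.2⟩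
  · ext ⟨x, y⟩
    simp only [rectUnion, Finset.mem_product, mem_iUnion, mem_prod, sUnion_eq_biUnion,
      Finset.mem_coe, exists_prop]
    aesop

namespace BA2

noncomputable def rects (S : BA2) : Finset (Set ℝ × Set ℝ) := (cubicalArea2_iff.mp S.2).choose

theorem rects_isIntervalPair (S : BA2) : ∀ p ∈ S.rects, IsIntervalPair p :=
  (cubicalArea2_iff.mp S.2).choose_spec.1

theorem rectUnion_rects (S : BA2) : rectUnion S.rects = S.1 :=
  (cubicalArea2_iff.mp S.2).choose_spec.2

variable {X : Type*} [SemilatticeSup X] [OrderBot X]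

noncomputable def lift (f : Set ℝ → Set ℝ → X) (S : BA2) : X :=
  S.rects.sup (Function.uncurry f)

theorem apply_rectUnion {f : Set ℝ → Set ℝ → X} {h : BA2 → X}
    (hsup : ∀ S T, h (S ⊔ T) = h S ⊔ h T) (hbot : h ⊥ = ⊥)
    (hrect : ∀ a b : Set ℝ, a.OrdConnected → b.OrdConnected →
      ∀ hab : CubicalArea2 (a ×ˢ b), h ⟨a ×ˢ b, hab⟩ = f a b)
    {ℛ : Finset (Set ℝ × Set ℝ)} (hℛ : ∀ p ∈ ℛ, IsIntervalPair p)
    (hS : CubicalArea2 (rectUnion ℛ)) : h ⟨rectUnion ℛ, hS⟩ = ℛ.sup (Function.uncurry f) := by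
  classical
  induction ℛ using Finset.induction_on with
  | empty =>
    rw [Finset.sup_empty, ← hbot]
    exact congrArg h (Subtype.ext rectUnion_empty)
  | insert p ℛ _ ih =>
    obtain ⟨⟨hc, hd⟩, hℛ⟩ := Finset.forall_mem_insert _ _ _ |>.mp hℛ
    have h_rect := hrect p.1 p.2 hc hd
      ((FinUnionIntervals.of_ordConnected hc).cubicalArea2_prod (.of_ordConnected hd))
    rw [Finset.sup_insert, ← ih hℛ (cubicalArea2_rectUnion hℛ), Function.uncurry_apply_pair,
      ← h_rect]
    exact (congrArg h (Subtype.ext (rectUnion_insert p ℛ))).trans (hsup _ _)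

theorem eq_lift {f : Set ℝ → Set ℝ → X} {h : BA2 → X}
    (hsup : ∀ S T, h (S ⊔ T) = h S ⊔ h T) (hbot : h ⊥ = ⊥)
    (hrect : ∀ a b : Set ℝ, a.OrdConnected → b.OrdConnected →
      ∀ hab : CubicalArea2 (a ×ˢ b), h ⟨a ×ˢ b, hab⟩ = f a b) : h = lift f := by
  funext S
  have hS : S = ⟨rectUnion S.rects, cubicalArea2_rectUnion S.rects_isIntervalPair⟩ :=
    Subtype.ext S.rectUnion_rects.symm
  conv_lhs => rw [hS]
  exact apply_rectUnion hsup hbot hrect S.rects_isIntervalPair _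

end BA2

structure IsBimorphism_s18 {X : Type*} [SemilatticeSup X] [OrderBot X] (f : Set ℝ → Set ℝ → X) :
    Prop where
  empty_left : ∀ b, FinUnionIntervals b → f ∅ b = ⊥
  empty_right : ∀ a, FinUnionIntervals a → f a ∅ = ⊥
  union_left : ∀ a a' b, FinUnionIntervals a → FinUnionIntervals a' → FinUnionIntervals b →
    f (a ∪ a') b = f a b ⊔ f a' b
  union_right : ∀ a b b', FinUnionIntervals a → FinUnionIntervals b → FinUnionIntervals b' →
    f a (b ∪ b') = f a b ⊔ f a b'

namespace IsBimorphism_s18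

variable {X : Type*} [SemilatticeSup X] [OrderBot X] {f : Set ℝ → Set ℝ → X}

theorem mono (hf : IsBimorphism_s18 f) {a a' b b' : Set ℝ} (ha : FinUnionIntervals a)
    (ha' : FinUnionIntervals a') (hb : FinUnionIntervals b) (hb' : FinUnionIntervals b')
    (haa' : a ⊆ a') (hbb' : b ⊆ b') : f a b ≤ f a' b' :=
  calc f a b ≤ f a b ⊔ f a' b := le_sup_left
    _ = f a' b := by rw [← hf.union_left a a' b ha ha' hb, union_eq_self_of_subset_left haa']
    _ ≤ f a' b ⊔ f a' b' := le_sup_left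
    _ = f a' b' := by rw [← hf.union_right a' b b' ha' hb hb', union_eq_self_of_subset_left hbb']

theorem le_of_prod_subset (hf : IsBimorphism_s18 f) {a a' b b' : Set ℝ} (ha : FinUnionIntervals a)
    (ha' : FinUnionIntervals a') (hb : FinUnionIntervals b) (hb' : FinUnionIntervals b')
    (h : a ×ˢ b ⊆ a' ×ˢ b') : f a b ≤ f a' b' := by
  rcases prod_subset_prod_iff.mp h with ⟨haa', hbb'⟩ | rfl | rfl
  · exact hf.mono ha ha' hb hb' haa' hbb'
  · exact (hf.empty_left b hb).trans_le bot_le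
  · exact (hf.empty_right a ha).trans_le bot_le

/-- Induction on the cover: with `p = (c, d)` the rectangle added last, the pieces
`(a \ c) × b` and `(a ∩ c) × (b \ d)` of `a × b` avoid `c × d`, hence lie in the rest of the
cover, while `(a ∩ c) × (b ∩ d) ⊆ c × d`. -/
theorem le_sup_of_prod_subset_rectUnion (hf : IsBimorphism_s18 f) {ℛ : Finset (Set ℝ × Set ℝ)}
    (hℛ : ∀ p ∈ ℛ, IsIntervalPair p) {a b : Set ℝ} (ha : FinUnionIntervals a)
    (hb : FinUnionIntervals b) (hab : a ×ˢ b ⊆ rectUnion ℛ) :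
    f a b ≤ ℛ.sup (Function.uncurry f) := by
  classical
  induction ℛ using Finset.induction_on generalizing a b with
  | empty =>
    rw [rectUnion_empty, subset_empty_iff, prod_eq_empty_iff] at hab
    rcases hab with rfl | rfl
    · exact (hf.empty_left b hb).le
    · exact (hf.empty_right a ha).le
  | insert p ℛ _ ih =>
    obtain ⟨⟨hc, hd⟩, hℛ⟩ := Finset.forall_mem_insert _ _ _ |>.mp hℛ
    rw [rectUnion_insert] at hab
    rw [Finset.sup_insert]
    have hac := ha.inter_ordConnected hc
    have hbd := hb.inter_ordConnected hd
    have hca := FinUnionIntervals.of_ordConnected hc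
    have hdb := FinUnionIntervals.of_ordConnected hd
    have h_outside : f (a \ p.1) b ≤ ℛ.sup (Function.uncurry f) :=
      ih hℛ (ha.diff_ordConnected hc) hb <|
        Disjoint.subset_right_of_subset_union ((prod_mono sdiff_subset le_rfl).trans hab)
          (disjoint_prod.mpr (.inl disjoint_sdiff_left))
    have h_below : f (a ∩ p.1) (b \ p.2) ≤ ℛ.sup (Function.uncurry f) :=
      ih hℛ hac (hb.diff_ordConnected hd) <|
        Disjoint.subset_right_of_subset_union
          ((prod_mono inter_subset_left sdiff_subset).trans hab)
          (disjoint_prod.mpr (.inr disjoint_sdiff_left))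
    have h_inside : f (a ∩ p.1) (b ∩ p.2) ≤ f p.1 p.2 :=
      hf.mono hac hca hbd hdb inter_subset_right inter_subset_right
    have h_split_a : f a b = f (a \ p.1) b ⊔ f (a ∩ p.1) b := by
      conv_lhs => rw [← sdiff_union_inter a p.1]
      exact hf.union_left _ _ _ (ha.diff_ordConnected hc) hac hb
    have h_split_b : f (a ∩ p.1) b = f (a ∩ p.1) (b \ p.2) ⊔ f (a ∩ p.1) (b ∩ p.2) := by
      conv_lhs => rw [← sdiff_union_inter b p.2]
      exact hf.union_right _ _ _ hac (hb.diff_ordConnected hd) hbd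
    rw [h_split_a, h_split_b]
    exact sup_le (h_outside.trans le_sup_right)
      (sup_le (h_below.trans le_sup_right) (h_inside.trans le_sup_left))

theorem sup_le_sup_of_rectUnion_subset (hf : IsBimorphism_s18 f) {ℛ ℛ' : Finset (Set ℝ × Set ℝ)}
    (hℛ : ∀ p ∈ ℛ, IsIntervalPair p) (hℛ' : ∀ p ∈ ℛ', IsIntervalPair p)
    (h : rectUnion ℛ ⊆ rectUnion ℛ') :
    ℛ.sup (Function.uncurry f) ≤ ℛ'.sup (Function.uncurry f) :=
  Finset.sup_le fun p hp => hf.le_sup_of_prod_subset_rectUnion hℛ'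
    (.of_ordConnected (hℛ p hp).1) (.of_ordConnected (hℛ p hp).2)
    ((prod_subset_rectUnion hp).trans h)

theorem sup_eq_of_rectUnion_eq (hf : IsBimorphism_s18 f) {ℛ ℛ' : Finset (Set ℝ × Set ℝ)}
    (hℛ : ∀ p ∈ ℛ, IsIntervalPair p) (hℛ' : ∀ p ∈ ℛ', IsIntervalPair p)
    (h : rectUnion ℛ = rectUnion ℛ') :
    ℛ.sup (Function.uncurry f) = ℛ'.sup (Function.uncurry f) :=
  le_antisymm (hf.sup_le_sup_of_rectUnion_subset hℛ hℛ' h.le)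
    (hf.sup_le_sup_of_rectUnion_subset hℛ' hℛ h.ge)

theorem lift_eq (hf : IsBimorphism_s18 f) {S : BA2} {ℛ : Finset (Set ℝ × Set ℝ)}
    (hℛ : ∀ p ∈ ℛ, IsIntervalPair p) (h : rectUnion ℛ = S.1) :
    BA2.lift f S = ℛ.sup (Function.uncurry f) :=
  hf.sup_eq_of_rectUnion_eq S.rects_isIntervalPair hℛ (S.rectUnion_rects.trans h.symm)

theorem lift_sup (hf : IsBimorphism_s18 f) (S T : BA2) :
    BA2.lift f (S ⊔ T) = BA2.lift f S ⊔ BA2.lift f T := by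
  classical
  have hST : ∀ p ∈ S.rects ∪ T.rects, IsIntervalPair p := fun p hp =>
    (Finset.mem_union.mp hp).elim (S.rects_isIntervalPair p) (T.rects_isIntervalPair p)
  rw [hf.lift_eq hST (by rw [rectUnion_union, S.rectUnion_rects, T.rectUnion_rects]; rfl),
    Finset.sup_union]
  rfl

theorem lift_bot (hf : IsBimorphism_s18 f) : BA2.lift f ⊥ = ⊥ :=
  (hf.lift_eq (ℛ := ∅) (by simp) rectUnion_empty).trans Finset.sup_empty

theorem lift_prod (hf : IsBimorphism_s18 f) {a b : Set ℝ} (ha : FinUnionIntervals a)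
    (hb : FinUnionIntervals b) (hab : CubicalArea2 (a ×ˢ b)) :
    BA2.lift f ⟨a ×ˢ b, hab⟩ = f a b := by
  set S : BA2 := ⟨a ×ˢ b, hab⟩
  refine le_antisymm (Finset.sup_le fun p hp => ?_) ?_
  · exact hf.le_of_prod_subset (.of_ordConnected (S.rects_isIntervalPair p hp).1) ha
      (.of_ordConnected (S.rects_isIntervalPair p hp).2) hb
      ((prod_subset_rectUnion hp).trans S.rectUnion_rects.le)
  · exact hf.le_sup_of_prod_subset_rectUnion S.rects_isIntervalPair ha hb S.rectUnion_rects.ge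

end IsBimorphism_s18

/-- `B_{ℝ²}`, with the bimorphism `(a, b) ↦ a × b`, satisfies the universal property
of the tensor product `B_ℝ ⊗ B_ℝ` in the category of semilattices with zero. -/
theorem stmt18 :
    (∀ a b : Set ℝ, FinUnionIntervals a → FinUnionIntervals b →
      CubicalArea2 (a ×ˢ b)) ∧
    ∀ (X : Type) (_ : SemilatticeSup X) (_ : OrderBot X) (f : Set ℝ → Set ℝ → X),
      (∀ b, FinUnionIntervals b → f ∅ b = ⊥) →
      (∀ a, FinUnionIntervals a → f a ∅ = ⊥) →
      (∀ a a' b, FinUnionIntervals a → FinUnionIntervals a' →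
        FinUnionIntervals b → f (a ∪ a') b = f a b ⊔ f a' b) →
      (∀ a b b', FinUnionIntervals a → FinUnionIntervals b →
        FinUnionIntervals b' → f a (b ∪ b') = f a b ⊔ f a b') →
      ∃! h : BA2 → X,
        (∀ S T : BA2, h (S ⊔ T) = h S ⊔ h T) ∧ h ⊥ = ⊥ ∧
        ∀ (a b : Set ℝ), FinUnionIntervals a → FinUnionIntervals b →
          ∀ (hab : CubicalArea2 (a ×ˢ b)), h ⟨a ×ˢ b, hab⟩ = f a b := by
  refine ⟨fun a b ha hb => ha.cubicalArea2_prod hb, fun X _ _ f h0l h0r hl hr => ?_⟩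
  have hf : IsBimorphism_s18 f := ⟨h0l, h0r, hl, hr⟩
  refine ⟨BA2.lift f, ⟨hf.lift_sup, hf.lift_bot, fun a b ha hb => hf.lift_prod ha hb⟩, ?_⟩
  rintro h ⟨hsup, hbot, hprod⟩
  exact BA2.eq_lift hsup hbot fun a b ha hb =>
    hprod a b (.of_ordConnected ha) (.of_ordConnected hb)
end

section
/- For cubical areas a, a' of ℝ^m and b, b' of ℝ^n, the product map satisfies: (a × b) ∩ (a' × b') = (a ∩ a') × (b ∩ b'), and the complement of a × b in ℝ^{m+n} equals (ℝ^m × bᶜ) ∪ (aᶜ × ℝ^n); hence (A, B) ↦ A × B is a bimorphism of Boolean-algebra-flavored operations from B_{ℝ^m} × B_{ℝ^n} to B_{ℝ^{m+n}}. -/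
open Set

/-- The product of `X ⊆ ℝᵐ` and `Y ⊆ ℝⁿ`, as a subset of `ℝ^(m+n)`. -/
def prodSet {m n : ℕ} (X : Set (Fin m → ℝ)) (Y : Set (Fin n → ℝ)) :
    Set (Fin (m + n) → ℝ) :=
  {z | (fun i => z (Fin.castAdd n i)) ∈ X ∧ (fun j => z (Fin.natAdd m j)) ∈ Y}

lemma prodSet_eq_preimage {m n : ℕ} (X : Set (Fin m → ℝ)) (Y : Set (Fin n → ℝ)) :
    prodSet X Y = (fun z : Fin (m + n) → ℝ => (z ∘ Fin.castAdd n, z ∘ Fin.natAdd m)) ⁻¹' X ×ˢ Y :=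
  rfl

lemma prodSet_inter_prodSet {m n : ℕ} (X X' : Set (Fin m → ℝ)) (Y Y' : Set (Fin n → ℝ)) :
    prodSet X Y ∩ prodSet X' Y' = prodSet (X ∩ X') (Y ∩ Y') := by
  simp only [prodSet_eq_preimage, ← preimage_inter, prod_inter_prod]

lemma compl_prodSet {m n : ℕ} (X : Set (Fin m → ℝ)) (Y : Set (Fin n → ℝ)) :
    (prodSet X Y)ᶜ = prodSet univ Yᶜ ∪ prodSet Xᶜ univ := by
  simp only [prodSet_eq_preimage, ← preimage_compl, compl_prod_eq_union, preimage_union,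
    union_comm]

lemma IsCube.prodSet {m n : ℕ} {C : Set (Fin m → ℝ)} {D : Set (Fin n → ℝ)}
    (hC : IsCube C) (hD : IsCube D) : IsCube (prodSet C D) := by
  obtain ⟨I, hI, rfl⟩ := hC
  obtain ⟨J, hJ, rfl⟩ := hD
  refine ⟨Fin.addCases I J, Fin.addCases (by simpa using hI) (by simpa using hJ), ?_⟩
  ext z
  simp [_root_.prodSet, Fin.forall_fin_add]

lemma prodSet_sUnion_sUnion {m n : ℕ} (S : Set (Set (Fin m → ℝ))) (T : Set (Set (Fin n → ℝ))) :
    prodSet (⋃₀ S) (⋃₀ T) = ⋃₀ image2 prodSet S T := by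
  ext z
  simp only [mem_sUnion, mem_image2]
  constructor
  · rintro ⟨⟨c, hc, hzc⟩, d, hd, hzd⟩
    exact ⟨_, ⟨c, hc, d, hd, rfl⟩, hzc, hzd⟩
  · rintro ⟨_, ⟨c, hc, d, hd, rfl⟩, hzc, hzd⟩
    exact ⟨⟨c, hc, hzc⟩, d, hd, hzd⟩

lemma CubicalArea.prodSet {m n : ℕ} {X : Set (Fin m → ℝ)} {Y : Set (Fin n → ℝ)}
    (hX : CubicalArea X) (hY : CubicalArea Y) : CubicalArea (prodSet X Y) := by
  classical
  obtain ⟨𝒞, h𝒞, rfl⟩ := hX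
  obtain ⟨𝒟, h𝒟, rfl⟩ := hY
  refine ⟨Finset.image₂ _root_.prodSet 𝒞 𝒟, ?_, by rw [Finset.coe_image₂, prodSet_sUnion_sUnion]⟩
  intro E hE
  obtain ⟨C, hC, D, hD, rfl⟩ := Finset.mem_image₂.1 hE
  exact (h𝒞 C hC).prodSet (h𝒟 D hD)

theorem stmt19_general {m n : ℕ} (a a' : Set (Fin m → ℝ)) (b b' : Set (Fin n → ℝ))
    (ha : CubicalArea a) (hb : CubicalArea b) :
    prodSet a b ∩ prodSet a' b' = prodSet (a ∩ a') (b ∩ b') ∧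
    (prodSet a b)ᶜ = prodSet (Set.univ : Set (Fin m → ℝ)) bᶜ ∪
      prodSet aᶜ (Set.univ : Set (Fin n → ℝ)) ∧
    CubicalArea (prodSet a b) :=
  ⟨prodSet_inter_prodSet a a' b b', compl_prodSet a b, ha.prodSet hb⟩

/-- The product map `(A, B) ↦ A × B` on cubical areas behaves as a bimorphism for the
Boolean operations: products multiply intersections componentwise, the complement of a
product is `(ℝᵐ × bᶜ) ∪ (aᶜ × ℝⁿ)`, and the product of cubical areas is cubical. -/
theorem stmt19 {m n : ℕ} (a a' : Set (Fin m → ℝ)) (b b' : Set (Fin n → ℝ))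
    (ha : CubicalArea a) (ha' : CubicalArea a') (hb : CubicalArea b)
    (hb' : CubicalArea b') :
    prodSet a b ∩ prodSet a' b' = prodSet (a ∩ a') (b ∩ b') ∧
    (prodSet a b)ᶜ = prodSet (Set.univ : Set (Fin m → ℝ)) bᶜ ∪
      prodSet aᶜ (Set.univ : Set (Fin n → ℝ)) ∧
    CubicalArea (prodSet a b) :=
  stmt19_general a a' b b' ha hb
end
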